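/- Let s ≥ 2 and 2 ≤ j ≤ s be integers and let γ ∈ ℝ. Define q : ℝ → ℝ by q(t) = E_j(t, t, …, t, γ − (s−1)t), where the first s − 1 arguments equal t, so that the arguments sum to γ. Then q is a polynomial function of t of degree exactly j; in particular its leading coefficient C(s−1, j) − (s−1)·C(s−1, j−1) is nonzero. -/

import Mathlib

/-!
Splitting the `j`-subsets of the `s` coordinates according to whether they contain the last one
gives `E_j(t, …, t, u) = C(s-1, j) tʲ + C(s-1, j-1) u tʲ⁻¹`. Substituting `u = γ - (s-1) t` leaves
`γ C(s-1, j-1) tʲ⁻¹` plus `(C(s-1, j) - (s-1) C(s-1, j-1)) tʲ`, and this leading coefficient is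
negative because `j C(s-1, j) = (s-j) C(s-1, j-1)`.
-/

/-- The `j`-th elementary symmetric polynomial of `x : Fin s → ℝ`
(`E 0 = 1`, `E j = 0` for `j > s`). -/
noncomputable def esymm (s j : ℕ) (x : Fin s → ℝ) : ℝ :=
  ∑ t ∈ Finset.powersetCard j (Finset.univ : Finset (Fin s)), ∏ i ∈ t, x i

open Finset Polynomial

section PowersetCard

variable {ι R : Type*} [CommSemiring R]

theorem Finset.sum_powersetCard_succ_insert_prod [DecidableEq ι] {a : ι} {S : Finset ι}
    (ha : a ∉ S) (k : ℕ) (x : ι → R) :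
    ∑ A ∈ powersetCard (k + 1) (insert a S), ∏ i ∈ A, x i =
      ∑ A ∈ powersetCard (k + 1) S, ∏ i ∈ A, x i +
        x a * ∑ A ∈ powersetCard k S, ∏ i ∈ A, x i := by
  have not_mem {A : Finset ι} (hA : A ∈ powersetCard k S) : a ∉ A :=
    fun h => ha ((mem_powersetCard.1 hA).1 h)
  rw [powersetCard_succ_insert ha, sum_union, sum_image, mul_sum]
  · exact congrArg _ (sum_congr rfl fun A hA => prod_insert (not_mem hA))
  · intro A hA B hB hAB
    simpa [erase_insert (not_mem hA), erase_insert (not_mem hB)] using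
      congrArg (erase · a) hAB
  · refine disjoint_left.2 fun A hA hA' => ?_
    obtain ⟨B, -, rfl⟩ := mem_image.1 hA'
    exact ha ((mem_powersetCard.1 hA).1 (mem_insert_self a B))

theorem Finset.sum_powersetCard_prod_of_forall_eq {S : Finset ι} {x : ι → R} {t : R}
    (hx : ∀ i ∈ S, x i = t) (k : ℕ) :
    ∑ A ∈ powersetCard k S, ∏ i ∈ A, x i = S.card.choose k * t ^ k := by
  rw [sum_congr rfl fun A hA => ?_, sum_const, card_powersetCard, nsmul_eq_mul]
  obtain ⟨hAS, hAk⟩ := mem_powersetCard.1 hA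
  rw [prod_congr rfl fun i hi => hx i (hAS hi), prod_const, hAk]

end PowersetCard

theorem esymm_succ_of_eq_except_last (n k : ℕ) (t u : ℝ) :
    esymm (n + 1) (k + 1) (fun i => if (i : ℕ) < n then t else u) =
      n.choose (k + 1) * t ^ (k + 1) + u * (n.choose k * t ^ k) := by
  have hx : ∀ i ∈ univ.erase (Fin.last n), (if (i : ℕ) < n then t else u) = t :=
    fun i hi => if_pos (Fin.val_lt_last (ne_of_mem_erase hi))
  have hcard : (univ.erase (Fin.last n)).card = n := by simp
  rw [esymm, ← insert_erase (mem_univ (Fin.last n)),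
    sum_powersetCard_succ_insert_prod (notMem_erase _ _),
    sum_powersetCard_prod_of_forall_eq hx, sum_powersetCard_prod_of_forall_eq hx, hcard]
  simp

theorem Nat.choose_succ_lt_mul_choose {n k : ℕ} (hk : 1 ≤ k) (hkn : k ≤ n) :
    n.choose (k + 1) < n * n.choose k := by
  nlinarith [Nat.choose_succ_right_eq n k, Nat.choose_pos hkn, Nat.sub_le n k]

/-- For `2 ≤ j ≤ s`, the function `q(t) = E_j(t, …, t, γ − (s−1)t)` (with the
first `s − 1` arguments equal to `t`) is a polynomial of degree exactly `j`,
with nonzero leading coefficient `C(s−1, j) − (s−1)·C(s−1, j−1)`. -/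
theorem esymm_on_line_degree (s j : ℕ) (hs : 2 ≤ s) (hj2 : 2 ≤ j) (hjs : j ≤ s)
    (γ : ℝ) (q : ℝ → ℝ)
    (hq : ∀ t : ℝ, q t =
      esymm s j (fun i => if (i : ℕ) < s - 1 then t else γ - ((s : ℝ) - 1) * t)) :
    ∃ P : Polynomial ℝ,
      (∀ t : ℝ, q t = P.eval t) ∧
      P.degree = j ∧
      P.leadingCoeff =
        ((s - 1).choose j : ℝ) - ((s : ℝ) - 1) * ((s - 1).choose (j - 1) : ℝ) ∧
      ((s - 1).choose j : ℝ) - ((s : ℝ) - 1) * ((s - 1).choose (j - 1) : ℝ) ≠ 0 := by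
  obtain ⟨n, rfl⟩ : ∃ n, s = n + 1 := ⟨s - 1, by omega⟩
  obtain ⟨k, rfl⟩ : ∃ k, j = k + 1 := ⟨j - 1, by omega⟩
  simp only [Nat.add_sub_cancel, Nat.cast_add, Nat.cast_one, add_sub_cancel_right] at hq ⊢
  set c : ℝ := n.choose (k + 1) - n * n.choose k
  have hc : c ≠ 0 := sub_ne_zero.2 <| by
    exact_mod_cast (Nat.choose_succ_lt_mul_choose (by omega) (by omega)).ne
  have hlt : (C (n.choose k * γ) * X ^ k).degree < (C c * X ^ (k + 1)).degree := by
    rw [degree_C_mul_X_pow _ hc]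
    exact (degree_C_mul_X_pow_le _ _).trans_lt (by exact_mod_cast k.lt_succ_self)
  refine ⟨C (n.choose k * γ) * X ^ k + C c * X ^ (k + 1), fun t => ?_, ?_, ?_, hc⟩
  · rw [hq, esymm_succ_of_eq_except_last]
    simp only [eval_add, eval_mul, eval_C, eval_pow, eval_X, c]
    ring
  · rw [degree_add_eq_right_of_degree_lt hlt, degree_C_mul_X_pow _ hc]
    norm_cast
  · rw [leadingCoeff_add_of_degree_lt hlt, leadingCoeff_C_mul_X_pow]
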